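/- arXiv:1708.08888 — 3 statements merged into one kernel-verified Lean document; each statement's English description precedes it below -/
import Mathlib

section
/- Let α ∈ 𝓕_m(Ω) and r > 0. For every u ∈ ℝ^{2N} with ru + α̂ ∈ 𝓕_N(Ω) one has the identity H(ru + α̂) = H₀(u) + F(ru) − (1/(2π))·(Σ_{k=1}^{m} Σ_{j≠j'} ΓᵏⱼΓᵏⱼ')·log r. -/
/-!
Purely algebraic. Split the pair sum of `H` at `ru + α̂` into pairs from different clusters,
which is the first sum of `F(ru)`, and pairs `j ≠ j'` inside a cluster `k`. For the latter
`(ruᵏⱼ + αᵏ) - (ruᵏⱼ' + αᵏ) = r(uᵏⱼ - uᵏⱼ')`, so the logarithm splits as `log r + log|uᵏⱼ - uᵏⱼ'|`,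
producing `-(1/2π) ΓᵏⱼΓᵏⱼ' log r` and the terms of `Hᵏ_{ℝ²}(uᵏ)`; the regular parts `g` of these
pairs, together with the self-interaction terms `(Γᵏⱼ)² h`, are the `j = j'` and `j ≠ j'` terms of
the second sum of `F(ru)`.
-/

noncomputable section

open Real

/-- The plane `ℝ²` with its Euclidean structure. -/
abbrev R2 : Type := EuclideanSpace ℝ (Fin 2)

/-- The standard symplectic matrix `J` (rotation by `-π/2`): `J(x₁,x₂) = (x₂,-x₁)`. -/
def Jrot (x : R2) : R2 := (WithLp.equiv 2 (Fin 2 → ℝ)).symm ![x 1, -(x 0)]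

/-- The rotation `e^{θJ}` of the plane. -/
def rotate (θ : ℝ) (x : R2) : R2 :=
  (WithLp.equiv 2 (Fin 2 → ℝ)).symm
    ![Real.cos θ * x 0 + Real.sin θ * x 1, -Real.sin θ * x 0 + Real.cos θ * x 1]

/-- The generalized Green's function `G(x,y) = -(1/2π) log|x-y| - g(x,y)`. -/
def Gf (g : R2 → R2 → ℝ) (x y : R2) : ℝ := -(1 / (2 * π)) * Real.log ‖x - y‖ - g x y

/-- `z` is a configuration of pairwise distinct points of `Ω`. -/
def Conf {ι : Type*} (Ω : Set R2) (z : ι → R2) : Prop :=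
  (∀ i, z i ∈ Ω) ∧ ∀ i i', i ≠ i' → z i ≠ z i'

/-- The `m`-vortex Hamiltonian `𝓗`. -/
def mHam {m : ℕ} (g : R2 → R2 → ℝ) (Γ : Fin m → ℝ) (a : Fin m → R2) : ℝ :=
  (∑ k, ∑ k', if k ≠ k' then Γ k * Γ k' * Gf g (a k) (a k') else 0)
    - ∑ k, Γ k ^ 2 * g (a k) (a k)

/-- Partial gradient `∇_{zᵢ} f(z) ∈ ℝ²` of a function of several planar variables. -/
def pgrad {ι : Type*} [DecidableEq ι] (f : (ι → R2) → ℝ) (z : ι → R2) (i : ι) : R2 :=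
  gradient (fun p => f (Function.update z i p)) (z i)

/-- `i`-th block of the Hessian of `f` at `z` applied to `w`, `(∇²f(z)w)ᵢ ∈ ℝ²`. -/
def hessVec {ι : Type*} [Fintype ι] [DecidableEq ι] (f : (ι → R2) → ℝ) (z w : ι → R2)
    (i : ι) : R2 :=
  gradient (fun p => fderiv ℝ f (Function.update z i p) w) (z i)

/-- Kernel of the Hessian `∇²f(z)` viewed as a map into the dual space. -/
def hessKer {ι : Type*} [Fintype ι] (f : (ι → R2) → ℝ) (z : ι → R2) :
    Submodule ℝ (ι → R2) :=
  LinearMap.ker ((fderiv ℝ (fderiv ℝ f) z : (ι → R2) →L[ℝ] (ι → R2) →L[ℝ] ℝ) : (ι → R2) →ₗ[ℝ] (ι → R2) →L[ℝ] ℝ)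

/-- `z : ℝ → (ι → ℝ²)` solves the vortex system `Γᵢ żᵢ = J ∇_{zᵢ} Ham(z)` on `I`. -/
def IsVortexSol {ι : Type*} [Fintype ι] [DecidableEq ι] (Γv : ι → ℝ)
    (Ham : (ι → R2) → ℝ) (I : Set ℝ) (z : ℝ → ι → R2) : Prop :=
  ∀ t ∈ I, ∀ i, HasDerivAt (fun s => Γv i • z s i) (Jrot (pgrad Ham (z t) i)) t

/-- The whole-plane `n`-vortex Hamiltonian. -/
def planeHam {n : ℕ} (Γk : Fin n → ℝ) (z : Fin n → R2) : ℝ :=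
  -(1 / (2 * π)) * ∑ j, ∑ j', if j ≠ j' then Γk j * Γk j' * Real.log ‖z j - z j'‖ else 0

/-- `Z` is a relative equilibrium `Z(t) = e^{±J t/ordσ} z⁰` of the whole-plane system. -/
def IsRelEq {n : ℕ} (Γk : Fin n → ℝ) (ordσ : ℕ) (Z : ℝ → Fin n → R2) : Prop :=
  (∃ ω : ℝ, (ω = 1 ∨ ω = -1) ∧ ∃ z0 : Fin n → R2,
      (∀ j j', j ≠ j' → z0 j ≠ z0 j') ∧ ∀ t j, Z t j = rotate (ω * t / (ordσ : ℝ)) (z0 j)) ∧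
  IsVortexSol Γk (planeHam Γk) Set.univ Z

/-- `w` solves the linearization `Γⱼẇⱼ = J(∇²H_{ℝ²}(Z(t))w)ⱼ` and is `σ`-symmetric. -/
def IsLinSol {n : ℕ} (Γk : Fin n → ℝ) (σ : Equiv.Perm (Fin n)) (Z : ℝ → Fin n → R2)
    (w : ℝ → Fin n → R2) : Prop :=
  (∀ t j, HasDerivAt (fun s => Γk j • w s j)
      (Jrot (hessVec (planeHam Γk) (Z t) (w t) j)) t) ∧
  ∀ t j, w (t + 2 * π) (σ⁻¹ j) = w t j

/-- `σ`-nondegeneracy of a relative equilibrium: `σ*Z(·+2π) = Z` and the space of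
`σ`-symmetric solutions of the linearized equation is exactly 3-dimensional. -/
def SigmaNondeg {n : ℕ} (Γk : Fin n → ℝ) (σ : Equiv.Perm (Fin n)) (Z : ℝ → Fin n → R2) :
    Prop :=
  (∀ t j, Z (t + 2 * π) (σ⁻¹ j) = Z t j) ∧
  ∃ W : Fin 3 → ℝ → Fin n → R2,
    LinearIndependent ℝ W ∧ (∀ p, IsLinSol Γk σ Z (W p)) ∧
    ∀ w, IsLinSol Γk σ Z w → w ∈ Submodule.span ℝ (Set.range W)

/-- The `N`-vortex Hamiltonian `H` on clustered configurations. -/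
def NHam {m : ℕ} {Nk : Fin m → ℕ} (g : R2 → R2 → ℝ)
    (Γc : (k : Fin m) → Fin (Nk k) → ℝ) (z : ((k : Fin m) × Fin (Nk k)) → R2) : ℝ :=
  (∑ i, ∑ i', if i ≠ i' then Γc i.1 i.2 * Γc i'.1 i'.2 * Gf g (z i) (z i') else 0)
    - ∑ i, Γc i.1 i.2 ^ 2 * g (z i) (z i)

/-- Square of the `H¹_T` distance of two (`C¹`, `T`-periodic) curves. -/
def H1distSq {ι : Type*} [Fintype ι] (T : ℝ) (u v : ℝ → ι → R2) : ℝ :=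
  ∫ t in (0:ℝ)..T,
    ((∑ i, ‖u t i - v t i‖ ^ 2) +
      ∑ i, ‖deriv (fun s => u s i) t - deriv (fun s => v s i) t‖ ^ 2)

/-- The function `F` appearing in the rescaled Hamiltonian. -/
def Ffun {m : ℕ} {Nk : Fin m → ℕ} (g : R2 → R2 → ℝ)
    (Γc : (k : Fin m) → Fin (Nk k) → ℝ) (α : Fin m → R2)
    (z : ((k : Fin m) × Fin (Nk k)) → R2) : ℝ :=
  (∑ i, ∑ i', if i.1 ≠ i'.1 then
      Γc i.1 i.2 * Γc i'.1 i'.2 * Gf g (z i + α i.1) (z i' + α i'.1) else 0)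
    - ∑ k, ∑ j, ∑ j', Γc k j * Γc k j' * g (z ⟨k, j⟩ + α k) (z ⟨k, j'⟩ + α k)

/-- The decoupled limit Hamiltonian `H₀(u) = Σₖ Hᵏ_{ℝ²}(uᵏ)`. -/
def H0 {m : ℕ} {Nk : Fin m → ℕ} (Γc : (k : Fin m) → Fin (Nk k) → ℝ)
    (u : ((k : Fin m) × Fin (Nk k)) → R2) : ℝ :=
  ∑ k, planeHam (Γc k) (fun j => u ⟨k, j⟩)

/-- The rescaled Hamiltonian `H_r(u) = H₀(u) + F(ru) - 𝓗(α)`. -/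
def Hr {m : ℕ} {Nk : Fin m → ℕ} (g : R2 → R2 → ℝ) (Γ : Fin m → ℝ)
    (Γc : (k : Fin m) → Fin (Nk k) → ℝ) (α : Fin m → R2) (r : ℝ)
    (u : ((k : Fin m) × Fin (Nk k)) → R2) : ℝ :=
  H0 Γc u + Ffun g Γc α (r • u) - mHam g Γ α

theorem Fintype.sum_sum_eq_sum_sum_ite_ne_add_sum_diag {β M : Type*} [Fintype β] [DecidableEq β]
    [AddCommMonoid M] (f : β → β → M) :
    ∑ j, ∑ j', f j j' = (∑ j, ∑ j', if j ≠ j' then f j j' else 0) + ∑ j, f j j := by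
  rw [← Finset.sum_add_distrib]
  refine Finset.sum_congr rfl fun j _ => ?_
  rw [← Finset.add_sum_erase _ _ (Finset.mem_univ j), add_comm, ← Finset.sum_filter]
  congr 2
  ext j'
  simp [eq_comm]

theorem Fintype.sum_sum_sigma_eq_sum_sum_ite_fst_ne_add_sum_fiber {κ M : Type*} {β : κ → Type*} [Fintype κ]
    [DecidableEq κ] [∀ k, Fintype (β k)] [AddCommMonoid M] (f : Sigma β → Sigma β → M) :
    ∑ i, ∑ i', f i i' =
      (∑ i, ∑ i', if i.1 ≠ i'.1 then f i i' else 0) + ∑ k, ∑ j, ∑ j', f ⟨k, j⟩ ⟨k, j'⟩ := by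
  have same_fiber : ∀ i : Sigma β, (∑ i', if i.1 = i'.1 then f i i' else 0) =
      ∑ j', f i ⟨i.1, j'⟩ := by
    intro i
    rw [Fintype.sum_sigma, Finset.sum_eq_single i.1 (fun k _ hk => by simp [Ne.symm hk]) (by simp)]
    simp
  calc ∑ i, ∑ i', f i i'
      = ∑ i, ((∑ i', if i.1 ≠ i'.1 then f i i' else 0) + ∑ i', if i.1 = i'.1 then f i i' else 0) := by
        refine Finset.sum_congr rfl fun i _ => ?_
        rw [← Finset.sum_add_distrib]
        exact Finset.sum_congr rfl fun i' _ => by split_ifs <;> simp_all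
    _ = _ := by
        simp only [Finset.sum_add_distrib, same_fiber, Fintype.sum_sigma]

theorem Real.log_norm_smul_add_sub_smul_add {E : Type*} [NormedAddCommGroup E] [NormedSpace ℝ E]
    {r : ℝ} (hr : 0 < r) {x y : E} (hxy : x ≠ y) (a : E) :
    Real.log ‖(r • x + a) - (r • y + a)‖ = Real.log r + Real.log ‖x - y‖ := by
  rw [add_sub_add_right_eq_sub, ← smul_sub, norm_smul, Real.norm_of_nonneg hr.le,
    Real.log_mul hr.ne' (norm_ne_zero_iff.2 (sub_ne_zero.2 hxy))]

theorem NHam_eq_cross_add_sum_mHam {m : ℕ} {Nk : Fin m → ℕ} (g : R2 → R2 → ℝ)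
    (Γc : (k : Fin m) → Fin (Nk k) → ℝ) (z : ((k : Fin m) × Fin (Nk k)) → R2) :
    NHam g Γc z =
      (∑ i, ∑ i', if i.1 ≠ i'.1 then Γc i.1 i.2 * Γc i'.1 i'.2 * Gf g (z i) (z i') else 0)
        + ∑ k, mHam g (Γc k) (fun j => z ⟨k, j⟩) := by
  have cross : ∀ i i' : (k : Fin m) × Fin (Nk k),
      (if i.1 ≠ i'.1 then (if i ≠ i' then Γc i.1 i.2 * Γc i'.1 i'.2 * Gf g (z i) (z i') else 0)
        else 0) = if i.1 ≠ i'.1 then Γc i.1 i.2 * Γc i'.1 i'.2 * Gf g (z i) (z i') else 0 := by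
    intro i i'
    split_ifs <;> simp_all
  rw [NHam, Fintype.sum_sum_sigma_eq_sum_sum_ite_fst_ne_add_sum_fiber,
    Fintype.sum_sigma (fun i => Γc i.1 i.2 ^ 2 * g (z i) (z i))]
  simp only [cross, mHam, ne_eq, Sigma.mk.inj_iff, heq_eq_eq, true_and, Finset.sum_sub_distrib]
  abel

theorem mHam_smul_add_const {n : ℕ} (g : R2 → R2 → ℝ) (Γ : Fin n → ℝ) {r : ℝ} (hr : 0 < r)
    {v : Fin n → R2} (hv : Function.Injective v) (a : R2) :
    mHam g Γ (fun j => r • v j + a) = planeHam Γ v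
      - ∑ j, ∑ j', Γ j * Γ j' * g (r • v j + a) (r • v j' + a)
      - 1 / (2 * π) * (∑ j, ∑ j', if j ≠ j' then Γ j * Γ j' else 0) * Real.log r := by
  have pair : ∀ j j', (if j ≠ j' then Γ j * Γ j' * Gf g (r • v j + a) (r • v j' + a) else 0)
      = -(1 / (2 * π)) * ((if j ≠ j' then Γ j * Γ j' else 0) * Real.log r)
        + -(1 / (2 * π)) * (if j ≠ j' then Γ j * Γ j' * Real.log ‖v j - v j'‖ else 0)
        - (if j ≠ j' then Γ j * Γ j' * g (r • v j + a) (r • v j' + a) else 0) := by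
    intro j j'
    split_ifs with h
    · rw [Gf, Real.log_norm_smul_add_sub_smul_add hr (hv.ne h)]
      ring
    · simp
  rw [mHam, planeHam, Fintype.sum_sum_eq_sum_sum_ite_ne_add_sum_diag
    (fun j j' => Γ j * Γ j' * g (r • v j + a) (r • v j' + a))]
  simp only [pair, Finset.sum_add_distrib, Finset.sum_sub_distrib, ← Finset.mul_sum,
    ← Finset.sum_mul, sq]
  ring

theorem statement4_general
    (Ω : Set R2)
    (g : R2 → R2 → ℝ)
    (m : ℕ)
    (Nk : Fin m → ℕ)
    (Γc : (k : Fin m) → Fin (Nk k) → ℝ)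
    (α : Fin m → R2)
    (r : ℝ) (hr : 0 < r)
    (u : ((k : Fin m) × Fin (Nk k)) → R2)
    (hu : Conf Ω (fun i => r • u i + α i.1)) :
    NHam g Γc (fun i => r • u i + α i.1)
      = H0 Γc u + Ffun g Γc α (r • u)
        - 1 / (2 * π) * (∑ k, ∑ j, ∑ j', if j ≠ j' then Γc k j * Γc k j' else 0)
          * Real.log r := by
  have cluster_injective : ∀ k, Function.Injective fun j => u ⟨k, j⟩ := by
    intro k j j' h
    by_contra hne
    exact hu.2 ⟨k, j⟩ ⟨k, j'⟩ (by simpa using hne) (by simp only [h])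
  rw [NHam_eq_cross_add_sum_mHam]
  simp only [mHam_smul_add_const g _ hr (cluster_injective _), H0, Ffun, Pi.smul_apply,
    Finset.sum_sub_distrib, ← Finset.sum_mul, ← Finset.mul_sum]
  ring

/-- `H(ru+α̂) = H₀(u) + F(ru) - (1/2π)(Σₖ Σ_{j≠j'} ΓᵏⱼΓᵏⱼ')·log r`. -/
theorem statement4
    (Ω : Set R2) (hΩopen : IsOpen Ω) (hΩconn : IsConnected Ω)
    (g : R2 → R2 → ℝ)
    (hg : ContDiffOn ℝ 2 (fun p : R2 × R2 => g p.1 p.2) (Ω ×ˢ Ω))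
    (hgsymm : ∀ x y, g x y = g y x)
    (m l : ℕ) (hl : 1 ≤ l) (hlm : l ≤ m)
    (Γ : Fin m → ℝ) (hΓ : ∀ k, Γ k ≠ 0)
    (Nk : Fin m → ℕ)
    (hNkhead : ∀ k : Fin m, (k : ℕ) < l → 2 ≤ Nk k)
    (hNktail : ∀ k : Fin m, l ≤ (k : ℕ) → Nk k = 1)
    (Γc : (k : Fin m) → Fin (Nk k) → ℝ) (hΓc : ∀ k j, Γc k j ≠ 0)
    (hΓctail : ∀ k : Fin m, l ≤ (k : ℕ) → ∀ j, Γc k j = Γ k)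
    (α : Fin m → R2) (hα : Conf Ω α)
    (r : ℝ) (hr : 0 < r)
    (u : ((k : Fin m) × Fin (Nk k)) → R2)
    (hu : Conf Ω (fun i => r • u i + α i.1)) :
    NHam g Γc (fun i => r • u i + α i.1)
      = H0 Γc u + Ffun g Γc α (r • u)
        - 1 / (2 * π) * (∑ k, ∑ j, ∑ j', if j ≠ j' then Γc k j * Γc k j' else 0)
          * Real.log r :=
  statement4_general Ω g m Nk Γc α r hr u hu
end
end

section
/- If α ∈ 𝓕_m(ℝ²) is a critical point of 𝓗_{ℝ²}, i.e. ∇𝓗_{ℝ²}(α) = 0, then Σ_{k≠k'} ΓᵏΓᵏ' = 0. -/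
noncomputable section

open Real

/-! The whole-plane Hamiltonian is logarithmically homogeneous: scaling a configuration by
`t > 0` shifts it by `-(1/2π) (Σ_{k≠k'} ΓᵏΓᵏ') log t`. Differentiating along the ray `t ↦ tα`
at `t = 1` (Euler's identity) gives `D𝓗(α) α = -(1/2π) Σ_{k≠k'} ΓᵏΓᵏ'`, and the left side
vanishes at a critical point. -/

theorem differentiableAt_planeHam {n : ℕ} (Γk : Fin n → ℝ) {z : Fin n → R2}
    (hz : ∀ j j', j ≠ j' → z j ≠ z j') : DifferentiableAt ℝ (planeHam Γk) z := by
  unfold planeHam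
  refine (DifferentiableAt.fun_sum fun j _ => DifferentiableAt.fun_sum fun j' _ => ?_).const_mul _
  split_ifs with h
  · have hne : z j - z j' ≠ 0 := sub_ne_zero.mpr (hz j j' h)
    have hsub : DifferentiableAt ℝ (fun z : Fin n → R2 => z j - z j') z := by fun_prop
    exact ((hsub.norm ℝ hne).log (norm_ne_zero_iff.mpr hne)).const_mul _
  · exact differentiableAt_const 0

theorem planeHam_smul {n : ℕ} (Γk : Fin n → ℝ) {z : Fin n → R2}
    (hz : ∀ j j', j ≠ j' → z j ≠ z j') {t : ℝ} (ht : t ≠ 0) :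
    planeHam Γk (t • z) = planeHam Γk z
      - (1 / (2 * π)) * (∑ j, ∑ j', if j ≠ j' then Γk j * Γk j' else 0) * Real.log t := by
  have hterm : ∀ j j', (if j ≠ j' then Γk j * Γk j' * Real.log ‖(t • z) j - (t • z) j'‖ else 0)
      = (if j ≠ j' then Γk j * Γk j' * Real.log ‖z j - z j'‖ else 0)
        + (if j ≠ j' then Γk j * Γk j' else 0) * Real.log t := by
    intro j j'
    split_ifs with h
    · have hne : ‖z j - z j'‖ ≠ 0 := norm_ne_zero_iff.mpr (sub_ne_zero.mpr (hz j j' h))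
      rw [Pi.smul_apply, Pi.smul_apply, ← smul_sub, norm_smul, Real.norm_eq_abs,
        Real.log_mul (abs_ne_zero.mpr ht) hne, Real.log_abs]
      ring
    · ring
  simp only [planeHam, hterm, Finset.sum_add_distrib, ← Finset.sum_mul]
  ring

theorem fderiv_eq_zero_of_pgrad_eq_zero {ι : Type*} [Fintype ι] [DecidableEq ι]
    {f : (ι → R2) → ℝ} {z : ι → R2} (hf : DifferentiableAt ℝ f z)
    (hcrit : ∀ i, pgrad f z i = 0) : fderiv ℝ f z = 0 := by
  have hpartial : ∀ i (v : R2), fderiv ℝ f z (Pi.single i v) = 0 := by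
    intro i v
    have hf' : HasFDerivAt f (fderiv ℝ f z) (Function.update z i (z i)) := by
      rw [Function.update_eq_self]; exact hf.hasFDerivAt
    have hcomp := (hf'.comp (z i) (hasFDerivAt_update z (z i))).fderiv
    have hzero : fderiv ℝ (fun p => f (Function.update z i p)) (z i) = 0 := by
      rw [← toDual_gradient, ← pgrad, hcrit i, map_zero]
    have hv : ContinuousLinearMap.pi (Pi.single i (ContinuousLinearMap.id ℝ R2)) v
        = (Pi.single i v : ι → R2) := by
      ext j : 1
      rcases eq_or_ne j i with rfl | hj
      · simp
      · simp [hj]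
    have := congrArg (fun L : R2 →L[ℝ] ℝ => L v) (hzero.symm.trans hcomp)
    simpa only [ContinuousLinearMap.comp_apply, hv, zero_apply, eq_comm] using this
  ext v
  rw [← Finset.univ_sum_single v, map_sum]
  simp [hpartial]

theorem fderiv_apply_self_of_smul_eq_add_log {E : Type*} [NormedAddCommGroup E]
    [NormedSpace ℝ E] {f : E → ℝ} {z : E} {c : ℝ} (hf : DifferentiableAt ℝ f z)
    (hscale : ∀ t : ℝ, 0 < t → f (t • z) = f z + c * Real.log t) :
    fderiv ℝ f z z = c := by
  have hray : HasDerivAt (fun t : ℝ => f (t • z)) (fderiv ℝ f z z) 1 := by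
    have hf' : HasFDerivAt f (fderiv ℝ f z) ((1 : ℝ) • z) := by
      rw [one_smul]; exact hf.hasFDerivAt
    have h := hf'.comp_hasDerivAt 1 ((hasDerivAt_id (1 : ℝ)).smul_const z)
    rw [one_smul] at h
    exact h
  have hlog : HasDerivAt (fun t : ℝ => f z + c * Real.log t) c 1 := by
    simpa using ((Real.hasDerivAt_log one_ne_zero).const_mul c).const_add (f z)
  have heq : (fun t : ℝ => f (t • z)) =ᶠ[nhds 1] fun t => f z + c * Real.log t := by
    filter_upwards [lt_mem_nhds one_pos] with t ht using hscale t ht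
  exact hray.unique (hlog.congr_of_eventuallyEq heq)

theorem statement13_general
    (m : ℕ) (Γ : Fin m → ℝ)
    (α : Fin m → R2) (hα : ∀ k k', k ≠ k' → α k ≠ α k')
    (hcrit : ∀ k, pgrad (planeHam Γ) α k = 0) :
    (∑ k, ∑ k', if k ≠ k' then Γ k * Γ k' else 0) = 0 := by
  set S := ∑ k, ∑ k', if k ≠ k' then Γ k * Γ k' else 0
  have hdiff := differentiableAt_planeHam Γ hα
  have hEuler : fderiv ℝ (planeHam Γ) α α = -(1 / (2 * π)) * S :=
    fderiv_apply_self_of_smul_eq_add_log hdiff fun t ht => by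
      rw [planeHam_smul Γ hα ht.ne']; ring
  rw [fderiv_eq_zero_of_pgrad_eq_zero hdiff hcrit, zero_apply] at hEuler
  have hπ : -(1 / (2 * π)) ≠ 0 := by simp [Real.pi_ne_zero]
  exact (mul_eq_zero.mp hEuler.symm).resolve_left hπ

/-- a critical point of `𝓗_{ℝ²}` forces `Σ_{k≠k'} ΓᵏΓᵏ' = 0`. -/
theorem statement13
    (m : ℕ) (Γ : Fin m → ℝ) (hΓ : ∀ k, Γ k ≠ 0)
    (α : Fin m → R2) (hα : ∀ k k', k ≠ k' → α k ≠ α k')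
    (hcrit : ∀ k, pgrad (planeHam Γ) α k = 0) :
    (∑ k, ∑ k', if k ≠ k' then Γ k * Γ k' else 0) = 0 :=
  statement13_general m Γ α hα hcrit
end
end

section
/- Let n ∈ ℕ, k ≥ 2, let U ⊆ ℝⁿ be an open neighborhood of 0 and let F : U → ℝ be of class C^k with the first derivative vanishing at the origin, DF(0) = 0. Then for every u ∈ ℝⁿ, the limit lim_{r→0⁺} Σ_{j=0}^{k−2} ((k−2)!/j!)·(−1)^{k−j}·r^{−(k−1−j)}·D^{j+1}F(ru)[u,…,u] = (1/(k−1))·D^kF(0)[u,…,u] holds; here D^{j+1}F(ru)[u,…,u] denotes the (j+1)-th derivative of F at ru applied to j copies of u, regarded as an element of the dual space (ℝⁿ)*, on the right-hand side D^kF(0) is applied to k−1 copies of u, and the convergence is in the norm of (ℝⁿ)*. -/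
/-!
Write `k = K + 2` and `G j r = D^{j+1}F(r u)[u, …, u, ·]`, so that `G j' = G (j + 1)` along the
ray. Multiplied by `r ^ (K + 1)`, the sum becomes
`ψ r = ∑_{j ≤ K} (-1)^(K-j) (K!/j!) r^j G j r`, the antiderivative of `r ^ K • G (K + 1) r`
produced by repeated integration by parts, and `ψ 0 = ± K! DF(0) = 0`. Since `G (K + 1)` is
continuous, the mean value inequality gives
`ψ r = r ^ (K + 1) / (K + 1) • G (K + 1) 0 + o(r ^ (K + 1))`.
-/

noncomputable section

open Filter Topology Asymptotics Metric Nat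

section

variable {X : Type*} [NormedAddCommGroup X] [NormedSpace ℝ X]

theorem isLittleO_pow_succ_of_hasDerivAt {χ χ' : ℝ → X} {K : ℕ} (hχ0 : χ 0 = 0)
    (hχ : ∀ᶠ s in 𝓝 0, HasDerivAt χ (χ' s) s) (hχ' : χ' =o[𝓝 0] (· ^ K)) :
    χ =o[𝓝 0] (· ^ (K + 1)) := by
  refine IsLittleO.of_bound fun ε hε => ?_
  obtain ⟨δ, hδ, hball⟩ := eventually_nhds_iff_ball.mp (hχ.and (hχ'.bound hε))
  filter_upwards [ball_mem_nhds 0 hδ] with r hr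
  have hsub : closedBall 0 |r| ⊆ ball (0 : ℝ) δ :=
    closedBall_subset_ball (by simpa using hr)
  have hbound : ∀ s ∈ closedBall (0 : ℝ) |r|, ‖χ' s‖ ≤ ε * |r| ^ K := fun s hs => by
    have hs' : |s| ≤ |r| := by simpa using hs
    calc ‖χ' s‖ ≤ ε * ‖s ^ K‖ := (hball s (hsub hs)).2
      _ ≤ ε * |r| ^ K := by
        rw [norm_pow, Real.norm_eq_abs]; gcongr
  have hr_mem : r ∈ closedBall (0 : ℝ) |r| := by simp [Real.norm_eq_abs]
  have := (convex_closedBall (0 : ℝ) |r|).norm_image_sub_le_of_norm_hasDerivWithin_le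
    (fun s hs => ((hball s (hsub hs)).1).hasDerivWithinAt) hbound
    (mem_closedBall_self (abs_nonneg r)) hr_mem
  rw [hχ0, sub_zero, sub_zero] at this
  rw [norm_pow, Real.norm_eq_abs, pow_succ, ← mul_assoc]
  simpa using this

theorem tendsto_inv_pow_smul_of_hasDerivAt {ψ g : ℝ → X} {K : ℕ} (hψ0 : ψ 0 = 0)
    (hψ : ∀ᶠ s in 𝓝 0, HasDerivAt ψ (s ^ K • g s) s) (hg : ContinuousAt g 0) :
    Tendsto (fun r => (r ^ (K + 1))⁻¹ • ψ r) (𝓝[≠] 0)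
      (𝓝 (((K : ℝ) + 1)⁻¹ • g 0)) := by
  set χ : ℝ → X := fun s => ψ s - (((K : ℝ) + 1)⁻¹ * s ^ (K + 1)) • g 0
  have hχ : ∀ᶠ s in 𝓝 0, HasDerivAt χ (s ^ K • (g s - g 0)) s := by
    filter_upwards [hψ] with s hs
    have hpow := ((hasDerivAt_pow (K + 1) s).const_mul ((K : ℝ) + 1)⁻¹).smul_const (g 0)
    convert hs.fun_sub hpow using 1
    rw [smul_sub]
    congr 1
    push_cast
    field_simp
  have hχ' : (fun s => s ^ K • (g s - g 0)) =o[𝓝 0] (· ^ K) := by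
    have hsmall : (fun s => g s - g 0) =o[𝓝 0] (fun _ => (1 : ℝ)) :=
      (isLittleO_one_iff (F := ℝ)).mpr (tendsto_sub_nhds_zero_iff.mpr hg.tendsto)
    simpa using (isBigO_refl (· ^ K) (𝓝 (0 : ℝ))).smul_isLittleO hsmall
  have hχo : χ =o[𝓝[≠] 0] (· ^ (K + 1)) :=
    (isLittleO_pow_succ_of_hasDerivAt (by simp [χ, hψ0]) hχ hχ').mono nhdsWithin_le_nhds
  have hlim := hχo.tendsto_inv_smul_nhds_zero.add_const (((K : ℝ) + 1)⁻¹ • g 0)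
  rw [zero_add] at hlim
  refine hlim.congr' (eventually_nhdsWithin_of_forall fun r (hr : r ≠ 0) => ?_)
  simp only [χ, smul_sub, smul_smul]
  field_simp
  abel

def powSmulAntideriv (K : ℕ) (g : ℕ → ℝ → X) (r : ℝ) : X :=
  ∑ j ∈ Finset.range (K + 1), ((-1) ^ (K - j) * (K ! / j ! : ℝ) * r ^ j) • g j r

@[simp]
lemma powSmulAntideriv_zero (g : ℕ → ℝ → X) (r : ℝ) : powSmulAntideriv 0 g r = g 0 r := by
  simp [powSmulAntideriv]

lemma powSmulAntideriv_succ (K : ℕ) (g : ℕ → ℝ → X) (r : ℝ) :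
    powSmulAntideriv (K + 1) g r =
      r ^ (K + 1) • g (K + 1) r - ((K : ℝ) + 1) • powSmulAntideriv K g r := by
  rw [powSmulAntideriv, Finset.sum_range_succ, powSmulAntideriv, Finset.smul_sum,
    Nat.sub_self, pow_zero, one_mul, div_self (by positivity), one_mul, add_comm,
    sub_eq_add_neg, ← Finset.sum_neg_distrib]
  congr 1
  refine Finset.sum_congr rfl fun j hj => ?_
  rw [smul_smul, ← neg_smul, Nat.sub_add_comm (Finset.mem_range_succ_iff.mp hj), pow_succ,
    Nat.factorial_succ]
  push_cast
  module

lemma powSmulAntideriv_at_zero {g : ℕ → ℝ → X} (hg : g 0 0 = 0) (K : ℕ) :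
    powSmulAntideriv K g 0 = 0 := by
  induction K with
  | zero => simpa using hg
  | succ K ih => simp [powSmulAntideriv_succ, ih]

theorem hasDerivAt_powSmulAntideriv {g : ℕ → ℝ → X} {K : ℕ} {r : ℝ}
    (hg : ∀ j ≤ K, HasDerivAt (g j) (g (j + 1) r) r) :
    HasDerivAt (powSmulAntideriv K g) (r ^ K • g (K + 1) r) r := by
  induction K with
  | zero => simpa [funext (powSmulAntideriv_zero g)] using hg 0 le_rfl
  | succ K ih =>
    have hpow := ((hasDerivAt_pow (K + 1) r).smul (hg (K + 1) le_rfl)).fun_sub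
      ((ih fun j hj => hg j (by omega)).const_smul ((K : ℝ) + 1))
    convert hpow using 1
    · exact funext (powSmulAntideriv_succ K g)
    rw [add_tsub_cancel_right, smul_smul, Nat.cast_succ, add_sub_cancel_right]

lemma inv_pow_smul_powSmulAntideriv (K : ℕ) (g : ℕ → ℝ → X) (r : ℝ) :
    (r ^ (K + 1))⁻¹ • powSmulAntideriv K g r =
      ∑ j ∈ Finset.range (K + 1),
        ((-1) ^ (K - j) * (K ! / j ! : ℝ) * (r ^ (K + 1 - j))⁻¹) • g j r := by
  rw [powSmulAntideriv, Finset.smul_sum]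
  refine Finset.sum_congr rfl fun j hj => ?_
  rw [smul_smul, pow_sub_of_lt r (Finset.mem_range.mp hj), mul_inv, inv_inv]
  congr 1
  ring

end

section

variable {E G : Type*} [NormedAddCommGroup E] [NormedSpace ℝ E]
  [NormedAddCommGroup G] [NormedSpace ℝ G]

def evalInit (u : E) (m : ℕ) : (E [×m + 1]→L[ℝ] G) →L[ℝ] E →L[ℝ] G :=
  (ContinuousMultilinearMap.apply ℝ (fun _ : Fin m => E) (E →L[ℝ] G) fun _ => u).comp
    (continuousMultilinearCurryRightEquiv' ℝ m E G).toLinearIsometry.toContinuousLinearMap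

@[simp]
lemma evalInit_apply_apply (u : E) (m : ℕ) (f : E [×m + 1]→L[ℝ] G) (v : E) :
    evalInit u m f v = f (Fin.snoc (fun _ => u) v) := rfl

lemma evalInit_apply (u : E) (m : ℕ) (f : E [×m + 1]→L[ℝ] G) :
    evalInit u m f = f.toContinuousLinearMap (fun _ => u) (Fin.last m) := by
  ext v
  rw [evalInit_apply_apply, ContinuousMultilinearMap.toContinuousLinearMap_apply,
    ← Fin.snoc_init_self (fun _ : Fin (m + 1) => u), Fin.update_snoc_last]
  rfl

lemma evalInit_fderiv_iteratedFDeriv (F : E → G) (u x : E) (m : ℕ) :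
    evalInit u m (fderiv ℝ (iteratedFDeriv ℝ (m + 1) F) x u) =
      evalInit u (m + 1) (iteratedFDeriv ℝ (m + 2) F x) := by
  ext v
  rw [evalInit_apply_apply, evalInit_apply_apply, iteratedFDeriv_succ_apply_left,
    ← Fin.cons_self_tail (fun _ : Fin (m + 1) => u), ← Fin.cons_snoc_eq_snoc_cons,
    Fin.cons_zero, Fin.tail_cons]
  rfl

def radialSlice (F : E → G) (u : E) (m : ℕ) (r : ℝ) : E →L[ℝ] G :=
  evalInit u m (iteratedFDeriv ℝ (m + 1) F (r • u))

lemma hasDerivAt_radialSlice {F : E → G} {u : E} {k m : ℕ} {r : ℝ}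
    (hF : ContDiffAt ℝ k F (r • u)) (hm : m + 2 ≤ k) :
    HasDerivAt (radialSlice F u m) (radialSlice F u (m + 1) r) r := by
  have hdiff : DifferentiableAt ℝ (iteratedFDeriv ℝ (m + 1) F) (r • u) :=
    (hF.iteratedFDeriv_right (m := 1) (mod_cast (by omega : 1 + (m + 1) ≤ k))).differentiableAt
      one_ne_zero
  have hline : HasDerivAt (fun s : ℝ => s • u) u r := by
    simpa using (hasDerivAt_id r).smul_const u
  have := (evalInit u m).hasFDerivAt.comp_hasDerivAt r
    (hdiff.hasFDerivAt.comp_hasDerivAt r hline)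
  rwa [Function.comp_def, evalInit_fderiv_iteratedFDeriv] at this

lemma continuousAt_radialSlice {F : E → G} {u : E} {k m : ℕ} {r : ℝ}
    (hF : ContDiffAt ℝ k F (r • u)) (hm : m + 1 ≤ k) : ContinuousAt (radialSlice F u m) r :=
  (evalInit u m).continuous.continuousAt.comp <|
    (hF.iteratedFDeriv_right (m := 0) (i := m + 1) (mod_cast (by omega))).continuousAt.comp
      (f := fun s : ℝ => s • u) (continuous_id.smul continuous_const).continuousAt

theorem tendsto_inv_pow_smul_powSmulAntideriv_radialSlice {F : E → G} {K : ℕ}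
    (hF : ∀ᶠ x in 𝓝 0, ContDiffAt ℝ (K + 2 : ℕ) F x) (hDF0 : fderiv ℝ F 0 = 0) (u : E) :
    Tendsto (fun r => (r ^ (K + 1))⁻¹ • powSmulAntideriv K (radialSlice F u) r) (𝓝[≠] 0)
      (𝓝 (((K : ℝ) + 1)⁻¹ • radialSlice F u (K + 1) 0)) := by
  have hline : ∀ᶠ s : ℝ in 𝓝 0, ContDiffAt ℝ (K + 2 : ℕ) F (s • u) :=
    ((continuous_id.smul continuous_const).tendsto' 0 0 (zero_smul ℝ u)).eventually hF
  refine tendsto_inv_pow_smul_of_hasDerivAt (g := radialSlice F u (K + 1)) ?_ ?_ ?_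
  · exact powSmulAntideriv_at_zero (by ext; simp [radialSlice, hDF0]) K
  · filter_upwards [hline] with s hs
    exact hasDerivAt_powSmulAntideriv fun j hj => hasDerivAt_radialSlice hs (by omega)
  · exact continuousAt_radialSlice hline.self_of_nhds le_rfl

end

/-- the key limit of the proof of Lemma 4.1: for a `C^k` function `F`
with `DF(0) = 0`,
`Σ_{j=0}^{k-2} ((k-2)!/j!)(-1)^{k-j} r^{-(k-1-j)} D^{j+1}F(ru)[u]^j → (1/(k-1)) D^kF(0)[u]^{k-1}`
in the dual of `ℝⁿ` as `r → 0⁺`. -/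
theorem statement19 (n k : ℕ) (hk : 2 ≤ k)
    (U : Set (EuclideanSpace ℝ (Fin n))) (hUopen : IsOpen U)
    (hU0 : (0 : EuclideanSpace ℝ (Fin n)) ∈ U)
    (F : EuclideanSpace ℝ (Fin n) → ℝ) (hF : ContDiffOn ℝ k F U)
    (hDF0 : fderiv ℝ F 0 = 0)
    (u : EuclideanSpace ℝ (Fin n)) :
    Tendsto
      (fun r : ℝ =>
        ∑ j ∈ Finset.range (k - 1),
          (((k - 2).factorial : ℝ) / (j.factorial : ℝ) * (-1 : ℝ) ^ (k - j)
              * (r ^ (k - 1 - j))⁻¹) •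
            ((iteratedFDeriv ℝ (j + 1) F (r • u)).toContinuousLinearMap
              (fun _ => u) (Fin.last j)))
      (nhdsWithin 0 (Set.Ioi 0))
      (nhds ((1 / ((k : ℝ) - 1)) •
        ((iteratedFDeriv ℝ k F 0).toContinuousLinearMap (fun _ => u)
          ⟨k - 1, by omega⟩))) := by
  obtain ⟨K, rfl⟩ : ∃ K, k = K + 2 := ⟨k - 2, by omega⟩
  have hFnear : ∀ᶠ x in 𝓝 0, ContDiffAt ℝ (K + 2 : ℕ) F x :=
    eventually_of_mem (hUopen.mem_nhds hU0) fun x hx => hF.contDiffAt (hUopen.mem_nhds hx)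
  have hlim := (tendsto_inv_pow_smul_powSmulAntideriv_radialSlice hFnear hDF0 u).mono_left
    (nhdsWithin_mono 0 fun r (hr : r ∈ Set.Ioi 0) => ne_of_gt hr)
  simp only [inv_pow_smul_powSmulAntideriv, radialSlice, evalInit_apply, zero_smul] at hlim
  refine (hlim.congr fun r => ?_).mono_right (le_of_eq (congrArg 𝓝 ?_))
  · refine Finset.sum_congr rfl fun j hj => ?_
    have hjK : j ≤ K := by simpa [Nat.lt_succ_iff] using hj
    rw [show K + 2 - 2 = K from rfl, show K + 2 - 1 - j = K + 1 - j by omega,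
      show K + 2 - j = K - j + 2 by omega, pow_add, neg_one_sq]
    congr 1
    ring
  · congr 1
    push_cast
    ring
end
end
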